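/- arXiv:math/0612104 — 2 statements merged into one kernel-verified Lean document; each statement's English description precedes it below -/
import Mathlib

section
/- If f is a finite-dimensional irreducible representation of a group G on a complex vector space V, then the linear span of the set of operators {f(g) : g ∈ G} is the whole space End(V) of linear operators on V. -/
/-!
Burnside's theorem. The span of the `f g` is the subalgebra of `End(V)` they generate, and `V` is a
simple module over it. By Schur's lemma the commutant of that subalgebra consists of scalars, so
every linear endomorphism of `V` commutes with it, and the Jacobson density theorem realizes every
such endomorphism by an element of the subalgebra.
-/

theorem IsSimpleModule.toModuleEnd_surjective_of_isAlgClosed (k : Type*) {A V : Type*} [Field k]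
    [IsAlgClosed k] [Ring A] [Algebra k A] [AddCommGroup V] [Module k V] [Module A V]
    [IsScalarTower k A V] [IsSimpleModule A V] [FiniteDimensional k V] :
    Function.Surjective (Module.toModuleEnd k (S := A) V) := by
  intro T
  have schur := (IsSimpleModule.algebraMap_end_bijective_of_isAlgClosed (A := A) (V := V) k).2
  have : Module.Finite (Module.End A V) V := Module.Finite.of_restrictScalars_finite k _ V
  let T' : Module.End (Module.End A V) V :=
    { T.toAddMonoidHom with
      map_smul' φ v := by
        obtain ⟨c, rfl⟩ := schur φ
        simp }
  obtain ⟨a, ha⟩ := Module.Finite.toModuleEnd_moduleEnd_surjective T'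
  exact ⟨a, LinearMap.ext fun v => congr($ha v)⟩

theorem Module.End.adjoin_eq_top_of_invariant_eq_bot_or_top {k V : Type*} [Field k]
    [IsAlgClosed k] [AddCommGroup V] [Module k V] [FiniteDimensional k V] [Nontrivial V]
    (s : Set (Module.End k V))
    (hs : ∀ p : Submodule k V, (∀ a ∈ s, ∀ x ∈ p, a x ∈ p) → p = ⊥ ∨ p = ⊤) :
    Algebra.adjoin k s = ⊤ := by
  let S := Algebra.adjoin k s
  have : IsSimpleModule S V := by
    rw [isSimpleModule_iff]
    refine { eq_bot_or_eq_top := fun p => ?_ }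
    have hp : ∀ a ∈ s, ∀ x ∈ p.restrictScalars k, a x ∈ p.restrictScalars k :=
      fun a ha x hx => p.smul_mem ⟨a, Algebra.subset_adjoin ha⟩ hx
    exact (hs _ hp).imp (Submodule.restrictScalars_eq_bot_iff k S V).1
      (Submodule.restrictScalars_eq_top_iff k S V).1
  refine eq_top_iff.2 fun T _ => ?_
  obtain ⟨a, ha⟩ := IsSimpleModule.toModuleEnd_surjective_of_isAlgClosed k (A := S) (V := V) T
  have hT : T = a := ha ▸ LinearMap.ext fun _ => rfl
  exact hT ▸ a.2

/-- For a finite-dimensional irreducible complex representation, the operators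
`f(g)` span the whole endomorphism space `End(V)`. -/
theorem stmt_9 {G V : Type*} [Group G]
    [AddCommGroup V] [Module ℂ V] [FiniteDimensional ℂ V] [Nontrivial V]
    (f : G →* (V ≃ₗ[ℂ] V))
    (hf : ∀ p : Submodule ℂ V, (∀ (g : G), ∀ x ∈ p, f g x ∈ p) → p = ⊥ ∨ p = ⊤) :
    Submodule.span ℂ {A : V →ₗ[ℂ] V | ∃ g : G, A = (f g).toLinearMap} = ⊤ := by
  let ρ := LinearEquiv.automorphismGroup.toLinearMapMonoidHom.comp f
  have hρ : {A : V →ₗ[ℂ] V | ∃ g : G, A = (f g).toLinearMap} = MonoidHom.mrange ρ := by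
    ext A
    simp [ρ, eq_comm]
  have hadjoin : Algebra.adjoin ℂ (MonoidHom.mrange ρ : Set (Module.End ℂ V)) = ⊤ :=
    Module.End.adjoin_eq_top_of_invariant_eq_bot_or_top _ fun p hp =>
      hf p fun g => hp _ (MonoidHom.mem_mrange.2 ⟨g, rfl⟩)
  rw [hρ, ← Submonoid.closure_eq (MonoidHom.mrange ρ), ← Algebra.adjoin_eq_span, hadjoin,
    Algebra.top_toSubmodule]
end

section
/- The тensor product representation f₁ ⊗ f₂ of the direct product group G₁ × G₂, acting on V₁ ⊗ V₂ by (f₁⊗f₂)(g₁,g₂)(x⊗y) = f₁(g₁)x ⊗ f₂(g₂)y, is irreducible if and only if both f₁ and f₂ are irreducible. -/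
/-!
Burnside's theorem (Schur's lemma plus Jacobson density): over an algebraically closed field, an
irreducible family of operators on a finite-dimensional space generates the whole endomorphism
algebra. Hence a subspace `W ⊆ V₁ ⊗ V₂` stable under all `f₁ g₁ ⊗ f₂ g₂` is stable under every
`T ⊗ 1`; the rank-one operators `φ(·) • x ⊗ 1` then show `W ⊆ V₁ ⊗ U` for the `G₂`-stable subspace
`U = {y | V₁ ⊗ y ⊆ W}`, which is `0` or `V₂`. Conversely, an invariant `p ⊆ V₁` gives the invariant
subspace `p ⊗ V₂` of dimension `dim p · dim V₂`, and symmetrically for `V₂`.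
-/

open scoped TensorProduct

open Module TensorProduct

section CommSemiring

variable {R M N : Type*} [CommSemiring R] [AddCommMonoid M] [Module R M] [AddCommMonoid N]
  [Module R N]

theorem Submodule.mapsTo_of_mem_adjoin {S : Set (End R M)} {p : Submodule R M}
    (hS : ∀ T ∈ S, ∀ x ∈ p, T x ∈ p) {T : End R M} (hT : T ∈ Algebra.adjoin R S) :
    ∀ x ∈ p, T x ∈ p := by
  induction hT using Algebra.adjoin_induction with
  | mem T hT => exact hS T hT
  | algebraMap c => intro x hx; simpa using p.smul_mem c hx
  | add T U _ _ hT hU => intro x hx; simpa using p.add_mem (hT x hx) (hU x hx)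
  | mul T U _ _ hT hU => intro x hx; exact hT _ (hU x hx)

def Submodule.rightFactor (W : Submodule R (M ⊗[R] N)) : Submodule R N :=
  ⨅ x : M, W.comap (TensorProduct.mk R M N x)

theorem Submodule.mem_rightFactor {W : Submodule R (M ⊗[R] N)} {y : N} :
    y ∈ W.rightFactor ↔ ∀ x : M, x ⊗ₜ y ∈ W := by
  simp [Submodule.rightFactor]

theorem LinearMap.rTensor_smulRight_apply (φ : Dual R M) (x : M) (w : M ⊗[R] N) :
    (φ.smulRight x).rTensor N w = x ⊗ₜ TensorProduct.lid R N (φ.rTensor N w) := by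
  induction w using TensorProduct.induction_on with
  | zero => simp
  | tmul a b => simp [smul_tmul]
  | add u v hu hv => simp [hu, hv, tmul_add]

theorem eq_zero_of_forall_lid_rTensor_eq_zero [Module.Free R M] {w : M ⊗[R] N}
    (hw : ∀ φ : Dual R M, TensorProduct.lid R N (φ.rTensor N w) = 0) : w = 0 := by
  classical
  let b := Module.Free.chooseBasis R M
  refine (equivFinsuppOfBasisLeft b).injective (Finsupp.ext fun i => ?_)
  simp [equivFinsuppOfBasisLeft_apply, hw]

theorem Submodule.eq_bot_of_rightFactor_eq_bot [Module.Free R M] {W : Submodule R (M ⊗[R] N)}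
    (hW : ∀ T : End R M, ∀ w ∈ W, T.rTensor N w ∈ W) (h : W.rightFactor = ⊥) : W = ⊥ := by
  refine (Submodule.eq_bot_iff W).mpr fun w hw => eq_zero_of_forall_lid_rTensor_eq_zero fun φ => ?_
  rw [← Submodule.mem_bot R, ← h, Submodule.mem_rightFactor]
  intro x
  rw [← LinearMap.rTensor_smulRight_apply]
  exact hW _ w hw

theorem Submodule.eq_top_of_rightFactor_eq_top {W : Submodule R (M ⊗[R] N)}
    (h : W.rightFactor = ⊤) : W = ⊤ := by
  rw [eq_top_iff, ← span_tmul_eq_top, Submodule.span_le]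
  rintro _ ⟨x, y, rfl⟩
  exact Submodule.mem_rightFactor.mp (h ▸ Submodule.mem_top) x

theorem rTensor_mapsTo_of_adjoin_eq_top {S : Set (End R M)} (hS : Algebra.adjoin R S = ⊤)
    {W : Submodule R (M ⊗[R] N)} (hW : ∀ T ∈ S, ∀ w ∈ W, T.rTensor N w ∈ W) (T : End R M) :
    ∀ w ∈ W, T.rTensor N w ∈ W := by
  have hT : End.rTensorAlgHom R M N T ∈ Algebra.adjoin R (End.rTensorAlgHom R M N '' S) := by
    rw [← AlgHom.map_adjoin, hS]
    exact ⟨T, trivial, rfl⟩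
  exact Submodule.mapsTo_of_mem_adjoin (by rintro _ ⟨U, hU, rfl⟩; exact hW U hU) hT

end CommSemiring

section Burnside

variable {k V : Type*} [Field k] [AddCommGroup V] [Module k V]

def IsIrreducibleFamily {ι : Type*} (ρ : ι → End k V) : Prop :=
  Nontrivial V ∧ ∀ p : Submodule k V, (∀ i, ∀ x ∈ p, ρ i x ∈ p) → p = ⊥ ∨ p = ⊤

theorem IsIrreducibleFamily.isSimpleModule_adjoin {ι : Type*} {ρ : ι → End k V}
    (h : IsIrreducibleFamily ρ) : IsSimpleModule (Algebra.adjoin k (Set.range ρ)) V := by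
  obtain ⟨_, hirr⟩ := h
  rw [isSimpleModule_iff]
  refine { exists_pair_ne := ⟨⊥, ⊤, bot_ne_top⟩, eq_bot_or_eq_top := fun q => ?_ }
  have := hirr (q.restrictScalars k) fun i x hx =>
    q.smul_mem ⟨ρ i, Algebra.subset_adjoin ⟨i, rfl⟩⟩ hx
  simpa only [Submodule.restrictScalars_eq_bot_iff, Submodule.restrictScalars_eq_top_iff] using this

variable [IsAlgClosed k] [FiniteDimensional k V]

theorem Subalgebra.eq_top_of_isSimpleModule (A : Subalgebra k (End k V)) [IsSimpleModule A V] :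
    A = ⊤ := by
  classical
  refine eq_top_iff.mpr fun T _ => ?_
  -- By Schur's lemma every `A`-endomorphism is a scalar, so `T` commutes with all of them.
  have hcomm : ∀ (ψ : End A V) (v : V), T (ψ v) = ψ (T v) := by
    intro ψ v
    obtain ⟨c, rfl⟩ := (IsSimpleModule.algebraMap_end_bijective_of_isAlgClosed k).2 ψ
    simp
  let T' : End (End A V) V := { toFun := T, map_add' := T.map_add, map_smul' := hcomm }
  let b := Module.finBasis k V
  obtain ⟨a, ha⟩ := jacobson_density T' (Finset.univ.image b)
  have : T = a := b.ext fun i => ha _ (Finset.mem_image_of_mem _ (Finset.mem_univ i))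
  exact this ▸ a.2

theorem IsIrreducibleFamily.adjoin_eq_top {ι : Type*} {ρ : ι → End k V}
    (h : IsIrreducibleFamily ρ) : Algebra.adjoin k (Set.range ρ) = ⊤ :=
  have := h.isSimpleModule_adjoin
  Subalgebra.eq_top_of_isSimpleModule _

end Burnside

section Tensor

variable {k V₁ V₂ : Type*} [Field k] [AddCommGroup V₁] [Module k V₁] [AddCommGroup V₂]
  [Module k V₂]

theorem nontrivial_tensorProduct_iff [FiniteDimensional k V₁] [FiniteDimensional k V₂] :
    Nontrivial (V₁ ⊗[k] V₂) ↔ Nontrivial V₁ ∧ Nontrivial V₂ := by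
  rw [← Module.finrank_pos_iff (R := k), finrank_tensorProduct, CanonicallyOrderedAdd.mul_pos,
    Module.finrank_pos_iff, Module.finrank_pos_iff]

theorem finrank_range_map_subtype (p : Submodule k V₁) (q : Submodule k V₂) :
    finrank k (LinearMap.range (map p.subtype q.subtype)) = finrank k p * finrank k q := by
  rw [LinearMap.finrank_range_of_inj
    (map_injective_of_flat_flat _ _ p.subtype_injective q.subtype_injective), finrank_tensorProduct]

theorem map_mem_range_map_subtype {p : Submodule k V₁} {q : Submodule k V₂} {T : End k V₁}
    {R : End k V₂} (hT : ∀ x ∈ p, T x ∈ p) (hR : ∀ y ∈ q, R y ∈ q) :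
    ∀ z ∈ LinearMap.range (map p.subtype q.subtype),
      map T R z ∈ LinearMap.range (map p.subtype q.subtype) := by
  rintro _ ⟨t, rfl⟩
  induction t using TensorProduct.induction_on with
  | zero => simp
  | tmul x y => exact ⟨⟨T x, hT x x.2⟩ ⊗ₜ ⟨R y, hR y y.2⟩, rfl⟩
  | add t s ht hs => simpa only [map_add] using add_mem ht hs

variable [FiniteDimensional k V₁] [FiniteDimensional k V₂]

theorem range_map_subtype_eq_bot_iff (p : Submodule k V₁) (q : Submodule k V₂) :
    LinearMap.range (map p.subtype q.subtype) = ⊥ ↔ p = ⊥ ∨ q = ⊥ := by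
  rw [← Submodule.finrank_eq_zero, finrank_range_map_subtype, mul_eq_zero,
    Submodule.finrank_eq_zero, Submodule.finrank_eq_zero]

theorem range_map_subtype_eq_top_iff [Nontrivial V₁] [Nontrivial V₂] (p : Submodule k V₁)
    (q : Submodule k V₂) : LinearMap.range (map p.subtype q.subtype) = ⊤ ↔ p = ⊤ ∧ q = ⊤ := by
  refine ⟨fun h => ?_, fun ⟨hp, hq⟩ => ?_⟩
  · have hrank := finrank_range_map_subtype p q
    rw [h, finrank_top, finrank_tensorProduct] at hrank
    have hp := Submodule.finrank_le p
    have hq := Submodule.finrank_le q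
    have h₁ := Module.finrank_pos (R := k) (M := V₁)
    have h₂ := Module.finrank_pos (R := k) (M := V₂)
    constructor <;> apply Submodule.eq_top_of_finrank_eq <;> nlinarith
  · subst hp hq
    refine Submodule.eq_top_of_finrank_eq ?_
    rw [finrank_range_map_subtype, finrank_top, finrank_top, finrank_tensorProduct]

theorem IsIrreducibleFamily.of_tensor {ι₁ ι₂ : Type*} {ρ₁ : ι₁ → End k V₁} {ρ₂ : ι₂ → End k V₂}
    (h : IsIrreducibleFamily fun i : ι₁ × ι₂ => map (ρ₁ i.1) (ρ₂ i.2)) :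
    IsIrreducibleFamily ρ₁ ∧ IsIrreducibleFamily ρ₂ := by
  obtain ⟨hnt, hirr⟩ := h
  obtain ⟨hnt₁, hnt₂⟩ := nontrivial_tensorProduct_iff.mp hnt
  refine ⟨⟨hnt₁, fun p hp => ?_⟩, ⟨hnt₂, fun q hq => ?_⟩⟩
  · have := hirr _ fun i => map_mem_range_map_subtype (hp i.1) (q := ⊤) fun _ _ => trivial
    simpa [range_map_subtype_eq_bot_iff, range_map_subtype_eq_top_iff] using this
  · have := hirr _ fun i => map_mem_range_map_subtype (p := ⊤) (fun _ _ => trivial) (hq i.2)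
    simpa [range_map_subtype_eq_bot_iff, range_map_subtype_eq_top_iff] using this

theorem IsIrreducibleFamily.tensor [IsAlgClosed k]
    {ι₁ ι₂ : Type*} {ρ₁ : ι₁ → End k V₁} {ρ₂ : ι₂ → End k V₂} (h₁ : IsIrreducibleFamily ρ₁)
    (h₂ : IsIrreducibleFamily ρ₂) (one₁ : ∃ i, ρ₁ i = 1) (one₂ : ∃ i, ρ₂ i = 1) :
    IsIrreducibleFamily fun i : ι₁ × ι₂ => map (ρ₁ i.1) (ρ₂ i.2) := by
  refine ⟨nontrivial_tensorProduct_iff.mpr ⟨h₁.1, h₂.1⟩, fun W hW => ?_⟩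
  obtain ⟨i₁, hi₁⟩ := one₁
  obtain ⟨i₂, hi₂⟩ := one₂
  have hW₁ : ∀ T : End k V₁, ∀ w ∈ W, T.rTensor V₂ w ∈ W :=
    rTensor_mapsTo_of_adjoin_eq_top h₁.adjoin_eq_top <| by
      rintro _ ⟨i, rfl⟩
      simpa [hi₂, LinearMap.rTensor, Module.End.one_eq_id] using hW (i, i₂)
  have hU : ∀ i, ∀ y ∈ W.rightFactor, ρ₂ i y ∈ W.rightFactor := by
    intro i y hy
    rw [Submodule.mem_rightFactor] at hy ⊢
    intro x
    simpa [hi₁] using hW (i₁, i) _ (hy x)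
  exact (h₂.2 _ hU).imp (Submodule.eq_bot_of_rightFactor_eq_bot hW₁)
    Submodule.eq_top_of_rightFactor_eq_top

theorem isIrreducibleFamily_tensor_iff [IsAlgClosed k] {ι₁ ι₂ : Type*} {ρ₁ : ι₁ → End k V₁}
    {ρ₂ : ι₂ → End k V₂} (one₁ : ∃ i, ρ₁ i = 1) (one₂ : ∃ i, ρ₂ i = 1) :
    IsIrreducibleFamily (fun i : ι₁ × ι₂ => map (ρ₁ i.1) (ρ₂ i.2)) ↔
      IsIrreducibleFamily ρ₁ ∧ IsIrreducibleFamily ρ₂ :=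
  ⟨IsIrreducibleFamily.of_tensor, fun ⟨h₁, h₂⟩ => h₁.tensor h₂ one₁ one₂⟩

end Tensor

/-- The tensor product representation of `G₁ × G₂` on `V₁ ⊗ V₂` is irreducible
iff both factors are irreducible. -/
theorem stmt_10 {G₁ G₂ V₁ V₂ : Type*} [Group G₁] [Group G₂]
    [AddCommGroup V₁] [Module ℂ V₁] [AddCommGroup V₂] [Module ℂ V₂]
    [FiniteDimensional ℂ V₁] [FiniteDimensional ℂ V₂]
    (f₁ : G₁ →* (V₁ ≃ₗ[ℂ] V₁)) (f₂ : G₂ →* (V₂ ≃ₗ[ℂ] V₂)) :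
    (Nontrivial (V₁ ⊗[ℂ] V₂) ∧
      ∀ p : Submodule ℂ (V₁ ⊗[ℂ] V₂),
        (∀ (g₁ : G₁) (g₂ : G₂), ∀ x ∈ p,
          TensorProduct.map (f₁ g₁).toLinearMap (f₂ g₂).toLinearMap x ∈ p) →
        p = ⊥ ∨ p = ⊤)
    ↔ ((Nontrivial V₁ ∧
          ∀ p : Submodule ℂ V₁, (∀ (g : G₁), ∀ x ∈ p, f₁ g x ∈ p) → p = ⊥ ∨ p = ⊤) ∧
       (Nontrivial V₂ ∧
          ∀ p : Submodule ℂ V₂, (∀ (g : G₂), ∀ x ∈ p, f₂ g x ∈ p) → p = ⊥ ∨ p = ⊤)) := by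
  have key := isIrreducibleFamily_tensor_iff (ρ₁ := fun g => (f₁ g).toLinearMap)
    (ρ₂ := fun g => (f₂ g).toLinearMap) ⟨1, by ext; simp⟩ ⟨1, by ext; simp⟩
  simpa [IsIrreducibleFamily, Prod.forall] using key
end
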